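/- arXiv:1712.07547 — 6 statements merged into one kernel-verified Lean document; each statement's English description precedes it below -/
import Mathlib

section
/- For v ∈ ℓ²(ℤ) ∩ ℓ^∞(ℤ), the identity ⟨v, D(v²)⟩ = −(Δx²/6) ⟨D₊v, (D₊v)²⟩ holds, where (D₊v)² denotes the pointwise square. -/
noncomputable section
open scoped BigOperators

/-- forward shift -/
def Sp (v : ℤ → ℝ) : ℤ → ℝ := fun j => v (j + 1)
/-- backward shift -/
def Sm (v : ℤ → ℝ) : ℤ → ℝ := fun j => v (j - 1)
/-- forward discrete derivative -/
def Dp (dx : ℝ) (v : ℤ → ℝ) : ℤ → ℝ := fun j => (v (j + 1) - v j) / dx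
/-- backward discrete derivative -/
def Dm (dx : ℝ) (v : ℤ → ℝ) : ℤ → ℝ := fun j => (v j - v (j - 1)) / dx
/-- centered discrete derivative -/
def Dc (dx : ℝ) (v : ℤ → ℝ) : ℤ → ℝ := fun j => (v (j + 1) - v (j - 1)) / (2 * dx)
/-- discrete Laplacian D₊D₋ -/
def DpDm (dx : ℝ) (v : ℤ → ℝ) : ℤ → ℝ := fun j => (v (j + 1) - 2 * v j + v (j - 1)) / dx ^ 2
/-- discrete inner product ⟨v,w⟩ = Δx ∑ v_j w_j -/
def ip (dx : ℝ) (v w : ℤ → ℝ) : ℝ := dx * ∑' j : ℤ, v j * w j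
/-- squared ℓ²_Δ norm -/
def n2sq (dx : ℝ) (v : ℤ → ℝ) : ℝ := dx * ∑' j : ℤ, (v j) ^ 2
/-- ℓ²_Δ norm -/
def nrm (dx : ℝ) (v : ℤ → ℝ) : ℝ := Real.sqrt (n2sq dx v)
/-- sup norm -/
def supn (v : ℤ → ℝ) : ℝ := ⨆ j : ℤ, |v j|
/-- v ∈ ℓ²(ℤ) -/
def l2 (v : ℤ → ℝ) : Prop := Summable (fun j : ℤ => (v j) ^ 2)
/-- v ∈ ℓ^∞(ℤ) -/
def linf (v : ℤ → ℝ) : Prop := BddAbove (Set.range fun j : ℤ => |v j|)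

/-!
Pointwise, `v_j (D(v²))_j = (D₊F)_j - (Δx²/6) (D₊v)_j³` with `F_j = v_j³/6 + v_{j-1}² v_j/2`, and
`∑ D₊F = 0` by telescoping. All series converge because an `ℓ²` sequence is bounded, so
`f² g ∈ ℓ¹` whenever `f, g ∈ ℓ²`.
-/

theorem Summable.sq_mul_of_summable_sq {ι : Type*} {f g : ι → ℝ}
    (hf : Summable fun i => f i ^ 2) (hg : Summable fun i => g i ^ 2) :
    Summable fun i => f i ^ 2 * g i := by
  -- `|g i| ≤ 1 + g i ^ 2 ≤ 1 + ∑' g ^ 2`, so `g` is bounded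
  refine Summable.of_norm_bounded (hf.mul_right (1 + ∑' i, g i ^ 2)) fun i => ?_
  have hgi : g i ^ 2 ≤ ∑' i, g i ^ 2 := hg.le_tsum i fun _ _ => sq_nonneg _
  rw [Real.norm_eq_abs, abs_mul, abs_of_nonneg (sq_nonneg _)]
  gcongr
  nlinarith [sq_abs (g i), sq_nonneg (|g i| - 1)]

theorem Summable.comp_add_right_int {f : ℤ → ℝ} (hf : Summable f) (k : ℤ) :
    Summable fun j => f (j + k) :=
  (Equiv.addRight k).summable_iff.mpr hf

theorem tsum_comp_add_right_int (f : ℤ → ℝ) (k : ℤ) : ∑' j, f (j + k) = ∑' j, f j :=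
  (Equiv.addRight k).tsum_eq f

namespace l2

variable {v w : ℤ → ℝ}

theorem comp_add_right (hv : l2 v) (k : ℤ) : l2 fun j => v (j + k) :=
  Summable.comp_add_right_int (f := fun j => v j ^ 2) hv k

theorem sub (hv : l2 v) (hw : l2 w) : l2 (v - w) :=
  ((hv.add hw).mul_left 2).of_nonneg_of_le (fun _ => sq_nonneg _) fun j => by
    simp only [Pi.sub_apply]
    nlinarith [sq_nonneg (v j + w j)]

theorem div_const (hv : l2 v) (c : ℝ) : l2 fun j => v j / c := by
  simpa only [l2, div_pow] using Summable.div_const hv (c ^ 2)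

theorem Dp (hv : l2 v) (dx : ℝ) : l2 (Dp dx v) :=
  ((hv.comp_add_right 1).sub hv).div_const dx

end l2

theorem Summable.Dp {G : ℤ → ℝ} (hG : Summable G) (dx : ℝ) : Summable (Dp dx G) :=
  ((hG.comp_add_right_int 1).sub hG).div_const dx

theorem tsum_Dp_eq_zero {G : ℤ → ℝ} (hG : Summable G) (dx : ℝ) : ∑' j, Dp dx G j = 0 := by
  simp only [Dp, tsum_div_const, (hG.comp_add_right_int 1).tsum_sub hG,
    tsum_comp_add_right_int G 1, sub_self, zero_div]

/-- Discretizes the flux `(2/3) v³` of `v (v²)ₓ = ((2/3) v³)ₓ`. -/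
def cubicFlux (v : ℤ → ℝ) : ℤ → ℝ := fun j => v j ^ 3 / 6 + v (j - 1) ^ 2 * v j / 2

theorem l2.summable_cubicFlux {v : ℤ → ℝ} (hv : l2 v) : Summable (cubicFlux v) := by
  have hcube : Summable fun j => v j ^ 2 * v j := hv.sq_mul_of_summable_sq hv
  have hmixed : Summable fun j => v (j - 1) ^ 2 * v j :=
    Summable.sq_mul_of_summable_sq (hv.comp_add_right (-1)) hv
  exact ((hcube.div_const 6).add (hmixed.div_const 2)).congr fun j => by
    simp only [cubicFlux]
    ring

theorem mul_Dc_sq_eq {dx : ℝ} (hdx : dx ≠ 0) (v : ℤ → ℝ) (j : ℤ) :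
    v j * Dc dx (fun i => v i ^ 2) j
      = Dp dx (cubicFlux v) j - dx ^ 2 / 6 * (Dp dx v j * Dp dx v j ^ 2) := by
  simp only [Dc, Dp, cubicFlux, add_sub_cancel_right]
  field_simp
  ring

theorem IPP3_general (dx : ℝ) (hdx : 0 < dx) (v : ℤ → ℝ) (hv : l2 v) :
    ip dx v (Dc dx (fun i => (v i) ^ 2))
      = -(dx ^ 2 / 6) * ip dx (Dp dx v) (fun i => (Dp dx v i) ^ 2) := by
  have hflux : Summable (cubicFlux v) := hv.summable_cubicFlux
  have hcube : Summable fun j => Dp dx v j * Dp dx v j ^ 2 := by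
    simpa only [mul_comm] using (hv.Dp dx).sq_mul_of_summable_sq (hv.Dp dx)
  simp only [ip, mul_Dc_sq_eq hdx.ne', (hflux.Dp dx).tsum_sub (hcube.mul_left _),
    tsum_Dp_eq_zero hflux, tsum_mul_left]
  ring

theorem IPP3 (dx : ℝ) (hdx : 0 < dx) (v : ℤ → ℝ) (hv : l2 v) (hv' : linf v) :
    ip dx v (Dc dx (fun i => (v i) ^ 2))
      = -(dx ^ 2 / 6) * ip dx (Dp dx v) (fun i => (Dp dx v i) ^ 2) :=
  IPP3_general dx hdx v hv
end
end

section
/- For v, w ∈ ℓ²(ℤ) with w bounded, the identity ⟨D₊D₋v, D(vw)⟩ = −(1/Δx²)⟨D₊w, v·S₊v⟩ + (1/Δx²)⟨Dw, S₋v·S₊v⟩ holds. -/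
noncomputable section
open scoped BigOperators

/-! Both sides are combinations of the sums `∑ⱼ v_{j+p} v_{j+q} w_{j+r}`, which converge
absolutely for `v ∈ ℓ²`, `w ∈ ℓ^∞` and are invariant under shifting `(p, q, r)` by a constant.
After expanding, the two sides differ by `∑ⱼ (v²w)_{j+1} - (v²w)_{j-1}` and
`2 ∑ⱼ v_{j-1} v_j w_{j-1} - v_j v_{j+1} w_j`, both zero by shift invariance. -/

lemma l2.comp_add {v : ℤ → ℝ} (hv : l2 v) (c : ℤ) : l2 fun j => v (j + c) :=
  (Equiv.addRight c).summable_iff.mpr hv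

lemma linf.comp_add {w : ℤ → ℝ} (hw : linf w) (c : ℤ) : linf fun j => w (j + c) :=
  hw.mono (Set.range_comp_subset_range (· + c) fun j => |w j|)

lemma l2.summable_mul {u v : ℤ → ℝ} (hu : l2 u) (hv : l2 v) :
    Summable fun j => u j * v j :=
  .of_norm_bounded (hu.add hv) fun j => by
    rw [Real.norm_eq_abs, abs_mul]
    nlinarith [two_mul_le_add_sq |u j| |v j|, sq_abs (u j), sq_abs (v j), abs_nonneg (u j),
      abs_nonneg (v j)]

lemma Summable.mul_linf {f w : ℤ → ℝ} (hf : Summable f) (hw : linf w) :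
    Summable fun j => f j * w j := by
  obtain ⟨C, hC⟩ := hw
  refine .of_norm_bounded (hf.abs.mul_right C) fun j => ?_
  rw [Real.norm_eq_abs, abs_mul]
  exact mul_le_mul_of_nonneg_left (hC ⟨j, rfl⟩) (abs_nonneg _)

def tripleSum (v w : ℤ → ℝ) (p q r : ℤ) : ℝ := ∑' j, v (j + p) * v (j + q) * w (j + r)

lemma hasSum_tripleSum {v w : ℤ → ℝ} (hv : l2 v) (hw : linf w) (p q r : ℤ) :
    HasSum (fun j => v (j + p) * v (j + q) * w (j + r)) (tripleSum v w p q r) :=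
  (((hv.comp_add p).summable_mul (hv.comp_add q)).mul_linf (hw.comp_add r)).hasSum

lemma tripleSum_add_const (v w : ℤ → ℝ) (p q r c : ℤ) :
    tripleSum v w (p + c) (q + c) (r + c) = tripleSum v w p q r := by
  refine .trans (tsum_congr fun j => ?_) ((Equiv.addRight c).tsum_eq _)
  simp only [Equiv.coe_addRight, add_right_comm j c, add_assoc]

section expansions

variable {v w : ℤ → ℝ} (dx : ℝ)

lemma tsum_DpDm_mul_Dc (hv : l2 v) (hw : linf w) :
    ∑' j, DpDm dx v j * Dc dx (fun i => v i * w i) j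
      = (tripleSum v w 1 1 1 - tripleSum v w (-1) 1 (-1) - 2 * tripleSum v w 0 1 1
          + 2 * tripleSum v w (-1) 0 (-1) + tripleSum v w (-1) 1 1
          - tripleSum v w (-1) (-1) (-1)) / (2 * dx ^ 3) := by
  have h := hasSum_tripleSum hv hw
  rw [← (((((((h 1 1 1).sub (h (-1) 1 (-1))).sub ((h 0 1 1).mul_left 2)).add
    ((h (-1) 0 (-1)).mul_left 2)).add (h (-1) 1 1)).sub (h (-1) (-1) (-1))).div_const
    (2 * dx ^ 3)).tsum_eq]
  exact tsum_congr fun j => by simp only [DpDm, Dc, add_zero, ← sub_eq_add_neg]; ring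

lemma tsum_Dp_mul (hv : l2 v) (hw : linf w) :
    ∑' j, Dp dx w j * (v j * Sp v j) = (tripleSum v w 0 1 1 - tripleSum v w 0 1 0) / dx := by
  have h := hasSum_tripleSum hv hw
  rw [← (((h 0 1 1).sub (h 0 1 0)).div_const dx).tsum_eq]
  exact tsum_congr fun j => by simp only [Dp, Sp, add_zero]; ring

lemma tsum_Dc_mul (hv : l2 v) (hw : linf w) :
    ∑' j, Dc dx w j * (Sm v j * Sp v j)
      = (tripleSum v w (-1) 1 1 - tripleSum v w (-1) 1 (-1)) / (2 * dx) := by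
  have h := hasSum_tripleSum hv hw
  rw [← (((h (-1) 1 1).sub (h (-1) 1 (-1))).div_const (2 * dx)).tsum_eq]
  exact tsum_congr fun j => by simp only [Dc, Sm, Sp, ← sub_eq_add_neg]; ring

end expansions

theorem IPP2_general (dx : ℝ) (v w : ℤ → ℝ) (hv : l2 v) (hw : linf w) :
    ip dx (DpDm dx v) (Dc dx (fun i => v i * w i))
      = -(1 / dx ^ 2) * ip dx (Dp dx w) (fun i => v i * Sp v i)
        + (1 / dx ^ 2) * ip dx (Dc dx w) (fun i => Sm v i * Sp v i) := by
  have h₁ : tripleSum v w 1 1 1 = tripleSum v w 0 0 0 := by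
    simpa using tripleSum_add_const v w 0 0 0 1
  have h₂ : tripleSum v w (-1) (-1) (-1) = tripleSum v w 0 0 0 := by
    simpa using tripleSum_add_const v w 0 0 0 (-1)
  have h₃ : tripleSum v w (-1) 0 (-1) = tripleSum v w 0 1 0 := by
    simpa using tripleSum_add_const v w 0 1 0 (-1)
  simp only [ip, tsum_DpDm_mul_Dc dx hv hw, tsum_Dp_mul dx hv hw, tsum_Dc_mul dx hv hw, h₁, h₂, h₃]
  ring

theorem IPP2 (dx : ℝ) (hdx : 0 < dx) (v w : ℤ → ℝ) (hv : l2 v) (hw : linf w) :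
    ip dx (DpDm dx v) (Dc dx (fun i => v i * w i))
      = -(1 / dx ^ 2) * ip dx (Dp dx w) (fun i => v i * Sp v i)
        + (1 / dx ^ 2) * ip dx (Dc dx w) (fun i => Sm v i * Sp v i) :=
  IPP2_general dx v w hv hw
end
end

section
/- For v ∈ ℓ²(ℤ), one has ⟨D₊D₋v, D(v²)⟩ = (1/3)⟨D₊v, (D₊v)²⟩ − (4/3)⟨Dv, (Dv)²⟩. -/
noncomputable section
open scoped BigOperators

private lemma summable_of_abs_le' {f g : ℤ → ℝ} (hg : Summable g) (h : ∀ j, |f j| ≤ g j) :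
    Summable f := by
  rw [← summable_abs_iff]; exact hg.of_nonneg_of_le (fun j => abs_nonneg _) h

private lemma tsum_shift' (f : ℤ → ℝ) : ∑' j : ℤ, f (j - 1) = ∑' j : ℤ, f j :=
  (Equiv.subRight (1:ℤ)).tsum_eq f

private lemma summable_shift' {f : ℤ → ℝ} (h : Summable f) : Summable (fun j : ℤ => f (j - 1)) :=
  (Equiv.subRight (1:ℤ)).summable_iff.2 h


set_option maxHeartbeats 2000000 in
theorem IPP2bis (dx : ℝ) (hdx : 0 < dx) (v : ℤ → ℝ) (hv : l2 v) :
    ip dx (DpDm dx v) (Dc dx (fun i => (v i) ^ 2))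
      = (1 / 3) * ip dx (Dp dx v) (fun i => (Dp dx v i) ^ 2)
        - (4 / 3) * ip dx (Dc dx v) (fun i => (Dc dx v i) ^ 2) := by
  have hdx' : dx ≠ 0 := ne_of_gt hdx
  -- boundedness of v
  obtain ⟨M, hM⟩ : ∃ M, ∀ j, |v j| ≤ M := by
    refine ⟨Real.sqrt (∑' i, (v i)^2), fun j => ?_⟩
    have h1 : (v j)^2 ≤ ∑' i, (v i)^2 := Summable.le_tsum hv j (fun i _ => sq_nonneg _)
    calc |v j| = Real.sqrt ((v j)^2) := by rw [Real.sqrt_sq_eq_abs]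
      _ ≤ _ := Real.sqrt_le_sqrt h1
  have hM0 : 0 ≤ M := le_trans (abs_nonneg _) (hM 0)
  -- forward difference and its summability
  set p : ℤ → ℝ := fun j => v (j + 1) - v j with hpdef
  have hvs : Summable (fun j : ℤ => (v (j + 1))^2) := (Equiv.addRight (1:ℤ)).summable_iff.2 hv
  have hp2 : Summable (fun j => (p j)^2) := by
    apply summable_of_abs_le' ((hvs.mul_left 2).add (hv.mul_left 2))
    intro j
    rw [abs_of_nonneg (sq_nonneg _)]
    simp only [hpdef]
    nlinarith [sq_nonneg (v (j+1) + v j)]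
  have hp2' : Summable (fun j => (p (j - 1))^2) := summable_shift' hp2
  have hpM : ∀ j, |p j| ≤ 2 * M := by
    intro j
    calc |p j| ≤ |v (j+1)| + |v j| := abs_sub _ _
      _ ≤ M + M := add_le_add (hM _) (hM _)
      _ = 2 * M := by ring
  -- monomials
  set g1 : ℤ → ℝ := fun j => v j * (p j)^2 with hg1def
  set g2 : ℤ → ℝ := fun j => v (j + 1) * (p j)^2 with hg2def
  set g3 : ℤ → ℝ := fun j => (p j)^3 with hg3def
  set g4 : ℤ → ℝ := fun j => (p j)^2 * p (j - 1) with hg4def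
  set g5 : ℤ → ℝ := fun j => p j * (p (j - 1))^2 with hg5def
  have hg1 : Summable g1 := by
    apply summable_of_abs_le' (hp2.mul_left M)
    intro j
    simp only [hg1def, abs_mul, abs_of_nonneg (sq_nonneg (p j))]
    exact mul_le_mul_of_nonneg_right (hM j) (sq_nonneg _)
  have hg2 : Summable g2 := by
    apply summable_of_abs_le' (hp2.mul_left M)
    intro j
    simp only [hg2def, abs_mul, abs_of_nonneg (sq_nonneg (p j))]
    exact mul_le_mul_of_nonneg_right (hM _) (sq_nonneg _)
  have hg3 : Summable g3 := by
    apply summable_of_abs_le' (hp2.mul_left (2 * M))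
    intro j
    have e : |g3 j| = p j ^ 2 * |p j| := by
      show |p j ^ 3| = _
      rw [pow_succ, abs_mul, abs_of_nonneg (sq_nonneg (p j))]
    rw [e]
    calc p j ^ 2 * |p j| ≤ p j ^ 2 * (2 * M) :=
          mul_le_mul_of_nonneg_left (hpM j) (sq_nonneg _)
      _ = 2 * M * p j ^ 2 := by ring
  have hg4 : Summable g4 := by
    apply summable_of_abs_le' (hp2.mul_left (2 * M))
    intro j
    have e : |g4 j| = p j ^ 2 * |p (j - 1)| := by
      show |p j ^ 2 * p (j - 1)| = _
      rw [abs_mul, abs_of_nonneg (sq_nonneg (p j))]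
    rw [e]
    calc p j ^ 2 * |p (j - 1)| ≤ p j ^ 2 * (2 * M) :=
          mul_le_mul_of_nonneg_left (hpM _) (sq_nonneg _)
      _ = 2 * M * p j ^ 2 := by ring
  have hg5 : Summable g5 := by
    apply summable_of_abs_le' (hp2'.mul_left (2 * M))
    intro j
    simp only [hg5def, abs_mul, abs_of_nonneg (sq_nonneg (p (j-1)))]
    exact mul_le_mul_of_nonneg_right (hpM _) (sq_nonneg _)
  have hg1' : Summable (fun j => g1 (j - 1)) := summable_shift' hg1
  have hg2' : Summable (fun j => g2 (j - 1)) := summable_shift' hg2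
  have hg3' : Summable (fun j => g3 (j - 1)) := summable_shift' hg3
  have hh : Summable (fun j => g1 j + g2 j) := hg1.add hg2
  have hh' : Summable (fun j => g1 (j - 1) + g2 (j - 1)) := hg1'.add hg2'
  have hzero : ∑' j : ℤ, ((g1 j + g2 j) - (g1 (j - 1) + g2 (j - 1))) = 0 := by
    rw [Summable.tsum_sub hh hh', tsum_shift' (fun j => g1 j + g2 j), sub_self]
  -- pointwise identities
  have keyL : ∀ j : ℤ, DpDm dx v j * Dc dx (fun i => (v i)^2) j
      = (1 / (2 * dx^3)) * (((g1 j + g2 j) - (g1 (j - 1) + g2 (j - 1))) - (g4 j + g5 j)) := by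
    intro j
    simp only [DpDm, Dc, hg1def, hg2def, hg3def, hg4def, hg5def, hpdef, sub_add_cancel]
    field_simp
    ring
  have keyR1 : ∀ j : ℤ, Dp dx v j * (Dp dx v j)^2 = (1 / dx^3) * g3 j := by
    intro j
    simp only [Dp, hg3def, hpdef]
    field_simp
  have keyR2 : ∀ j : ℤ, Dc dx v j * (Dc dx v j)^2
      = (1 / (8 * dx^3)) * ((g3 j + g3 (j - 1)) + (3 * g4 j + 3 * g5 j)) := by
    intro j
    simp only [Dc, hg3def, hg4def, hg5def, hpdef, sub_add_cancel]
    field_simp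
    ring
  -- tsum computations
  have TL : ∑' j : ℤ, DpDm dx v j * Dc dx (fun i => (v i)^2) j
      = (1 / (2 * dx^3)) * (0 - (∑' j : ℤ, g4 j + ∑' j : ℤ, g5 j)) := by
    rw [tsum_congr keyL, tsum_mul_left]
    congr 1
    rw [Summable.tsum_sub (hh.sub hh') (hg4.add hg5), Summable.tsum_sub hh hh',
      tsum_shift' (fun j => g1 j + g2 j), sub_self, Summable.tsum_add hg4 hg5]
  have TR1 : ∑' j : ℤ, Dp dx v j * (Dp dx v j)^2 = (1 / dx^3) * ∑' j : ℤ, g3 j := by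
    rw [tsum_congr keyR1, tsum_mul_left]
  have TR2 : ∑' j : ℤ, Dc dx v j * (Dc dx v j)^2
      = (1 / (8 * dx^3)) * ((∑' j : ℤ, g3 j + ∑' j : ℤ, g3 j)
          + (3 * ∑' j : ℤ, g4 j + 3 * ∑' j : ℤ, g5 j)) := by
    rw [tsum_congr keyR2, tsum_mul_left]
    congr 1
    rw [Summable.tsum_add (hg3.add hg3') ((hg4.mul_left 3).add (hg5.mul_left 3)),
      Summable.tsum_add hg3 hg3', tsum_shift' g3,
      Summable.tsum_add (hg4.mul_left 3) (hg5.mul_left 3), tsum_mul_left, tsum_mul_left]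
  -- conclude
  simp only [ip, TL, TR1, TR2]
  field_simp
  ring
end
end

section
/- For v ∈ ℓ²(ℤ) ∩ ℓ^∞(ℤ) and w ∈ ℓ^∞(ℤ) with Dw, DDw suitably bounded, one has ⟨D(vw), D(v²)⟩ ≤ 2‖v‖_{ℓ^∞}‖w‖_{ℓ^∞}‖Dv‖²_{ℓ²_Δ} − (8Δx²/3)⟨Dw, (Dv)³⟩ − (2/3)⟨DDw, v³⟩, where powers of sequences are pointwise. -/
noncomputable section
open scoped BigOperators

/-- double centered derivative (DDw)_j = (w_{j+2} - 2w_j + w_{j-2})/(4Δx²) -/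
def DD (dx : ℝ) (w : ℤ → ℝ) : ℤ → ℝ := fun j => (w (j + 2) - 2 * w j + w (j - 2)) / (4 * dx ^ 2)

/-- bounded times absolutely summable is summable -/
lemma summable_bdd_mul {g h : ℤ → ℝ} {C : ℝ} (hb : ∀ j, |g j| ≤ C)
    (hh : Summable fun j => |h j|) : Summable fun j => g j * h j := by
  refine Summable.of_abs (Summable.of_nonneg_of_le (fun j => abs_nonneg _)
    (fun j => ?_) (hh.mul_left C))
  rw [abs_mul]
  exact mul_le_mul_of_nonneg_right (hb j) (abs_nonneg _)

set_option maxHeartbeats 1600000 in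
theorem EQ4 (dx : ℝ) (hdx : 0 < dx) (v w : ℤ → ℝ)
    (hv : l2 v) (hv' : linf v) (hw : linf w)
    (hDw : linf (Dc dx w)) (hDDw : linf (DD dx w)) :
    ip dx (Dc dx (fun i => v i * w i)) (Dc dx (fun i => (v i) ^ 2))
      ≤ 2 * supn v * supn w * n2sq dx (Dc dx v)
        - (8 * dx ^ 2 / 3) * ip dx (Dc dx w) (fun i => (Dc dx v i) ^ 3)
        - (2 / 3) * ip dx (DD dx w) (fun i => (v i) ^ 3) := by
  have hdx' : dx ≠ 0 := ne_of_gt hdx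
  have hMv : ∀ j, |v j| ≤ supn v := fun j => le_ciSup hv' j
  have hMw : ∀ j, |w j| ≤ supn w := fun j => le_ciSup hw j
  have hMDw : ∀ j, |Dc dx w j| ≤ supn (Dc dx w) := fun j => le_ciSup hDw j
  have hMDDw : ∀ j, |DD dx w j| ≤ supn (DD dx w) := fun j => le_ciSup hDDw j
  have hMv0 : 0 ≤ supn v := le_trans (abs_nonneg _) (hMv 0)
  have hMw0 : 0 ≤ supn w := le_trans (abs_nonneg _) (hMw 0)
  have hv2 : Summable (fun j : ℤ => (v j) ^ 2) := hv
  -- shifted square sums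
  have hvp : Summable (fun j : ℤ => (v (j + 1)) ^ 2) :=
    ((Equiv.addRight (1 : ℤ)).summable_iff).mpr hv2
  have hvm : Summable (fun j : ℤ => (v (j - 1)) ^ 2) :=
    ((Equiv.subRight (1 : ℤ)).summable_iff).mpr hv2
  -- centered derivative is square summable
  have hDv2 : Summable (fun j : ℤ => (Dc dx v j) ^ 2) := by
    apply Summable.of_nonneg_of_le (fun j => sq_nonneg _) (fun j => ?_)
      ((hvp.add hvm).div_const (2 * dx ^ 2))
    show (Dc dx v j) ^ 2 ≤ ((v (j + 1)) ^ 2 + (v (j - 1)) ^ 2) / (2 * dx ^ 2)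
    unfold Dc
    rw [div_pow, div_le_div_iff₀ (by positivity) (by positivity)]
    nlinarith [mul_nonneg (sq_nonneg dx) (sq_nonneg (v (j + 1) + v (j - 1)))]
  -- cubes absolutely summable
  have cube_abs : ∀ (u : ℤ → ℝ) (M : ℝ), (∀ j, |u j| ≤ M) →
      Summable (fun j : ℤ => (u j) ^ 2) → Summable (fun j : ℤ => |(u j) ^ 3|) := by
    intro u M hb hs
    apply Summable.of_nonneg_of_le (fun j => abs_nonneg _) (fun j => ?_) (hs.mul_left M)
    rw [abs_pow]
    calc |u j| ^ 3 = |u j| ^ 2 * |u j| := by ring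
      _ ≤ |u j| ^ 2 * M := mul_le_mul_of_nonneg_left (hb j) (sq_nonneg _)
      _ = M * (u j) ^ 2 := by rw [sq_abs]; ring
  have hv3 : Summable (fun j : ℤ => |(v j) ^ 3|) := cube_abs v (supn v) hMv hv2
  have hv3p : Summable (fun j : ℤ => |(v (j + 1)) ^ 3|) :=
    ((Equiv.addRight (1 : ℤ)).summable_iff).mpr hv3
  have hv3m : Summable (fun j : ℤ => |(v (j - 1)) ^ 3|) :=
    ((Equiv.subRight (1 : ℤ)).summable_iff).mpr hv3
  -- Dv is bounded
  have hDvb : ∀ j, |Dc dx v j| ≤ supn v / dx := by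
    intro j
    unfold Dc
    rw [abs_div, abs_of_pos (by positivity : (0:ℝ) < 2 * dx),
      div_le_div_iff₀ (by positivity) hdx]
    have h1 : |v (j + 1) - v (j - 1)| ≤ |v (j + 1)| + |v (j - 1)| := abs_sub _ _
    nlinarith [hMv (j + 1), hMv (j - 1)]
  have hDv3 : Summable (fun j : ℤ => |(Dc dx v j) ^ 3|) := cube_abs _ _ hDvb hDv2
  -- bound on the first coefficient
  have hSb : ∀ j, |v (j + 1) * w (j + 1) + v (j - 1) * w (j - 1)| ≤ 2 * supn v * supn w := by
    intro j
    calc |v (j + 1) * w (j + 1) + v (j - 1) * w (j - 1)|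
        ≤ |v (j + 1) * w (j + 1)| + |v (j - 1) * w (j - 1)| := abs_add_le _ _
      _ = |v (j + 1)| * |w (j + 1)| + |v (j - 1)| * |w (j - 1)| := by rw [abs_mul, abs_mul]
      _ ≤ supn v * supn w + supn v * supn w := add_le_add
          (mul_le_mul (hMv _) (hMw _) (abs_nonneg _) hMv0)
          (mul_le_mul (hMv _) (hMw _) (abs_nonneg _) hMv0)
      _ = 2 * supn v * supn w := by ring
  -- summability of each term in the identity
  have hA : Summable (fun j : ℤ =>
      (v (j + 1) * w (j + 1) + v (j - 1) * w (j - 1)) * (Dc dx v j) ^ 2) :=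
    summable_bdd_mul hSb hDv2.abs
  have hB0 : Summable (fun j : ℤ => Dc dx w j * (Dc dx v j) ^ 3) :=
    summable_bdd_mul hMDw hDv3
  have hC1 : Summable (fun j : ℤ => Dc dx w j * (v (j + 1)) ^ 3) :=
    summable_bdd_mul hMDw hv3p
  have hC2 : Summable (fun j : ℤ => Dc dx w j * (v (j - 1)) ^ 3) :=
    summable_bdd_mul hMDw hv3m
  have hD3 : Summable (fun j : ℤ => DD dx w j * (v j) ^ 3) :=
    summable_bdd_mul hMDDw hv3
  -- pointwise algebraic identity
  have hpt : ∀ j : ℤ, Dc dx (fun i => v i * w i) j * Dc dx (fun i => (v i) ^ 2) j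
      = (v (j + 1) * w (j + 1) + v (j - 1) * w (j - 1)) * (Dc dx v j) ^ 2
        + (-(8 * dx ^ 2 / 3) * (Dc dx w j * (Dc dx v j) ^ 3)
          + (1 / (3 * dx)) * (Dc dx w j * (v (j + 1)) ^ 3 - Dc dx w j * (v (j - 1)) ^ 3)) := by
    intro j
    unfold Dc
    field_simp
    ring
  -- split the sum
  have hB : Summable (fun j : ℤ => -(8 * dx ^ 2 / 3) * (Dc dx w j * (Dc dx v j) ^ 3)) :=
    hB0.mul_left _
  have hC : Summable (fun j : ℤ =>
      (1 / (3 * dx)) * (Dc dx w j * (v (j + 1)) ^ 3 - Dc dx w j * (v (j - 1)) ^ 3)) :=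
    (hC1.sub hC2).mul_left _
  have hsum : ∑' j : ℤ, Dc dx (fun i => v i * w i) j * Dc dx (fun i => (v i) ^ 2) j
      = (∑' j : ℤ, (v (j + 1) * w (j + 1) + v (j - 1) * w (j - 1)) * (Dc dx v j) ^ 2)
        + (-(8 * dx ^ 2 / 3) * ∑' j : ℤ, Dc dx w j * (Dc dx v j) ^ 3
          + (1 / (3 * dx)) * ((∑' j : ℤ, Dc dx w j * (v (j + 1)) ^ 3)
            - ∑' j : ℤ, Dc dx w j * (v (j - 1)) ^ 3)) := by
    rw [tsum_congr hpt, Summable.tsum_add hA (hB.add hC), Summable.tsum_add hB hC,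
      tsum_mul_left, tsum_mul_left, Summable.tsum_sub hC1 hC2]
  -- shift the index in the last two sums
  have hsh1 : ∑' j : ℤ, Dc dx w j * (v (j + 1)) ^ 3
      = ∑' j : ℤ, Dc dx w (j - 1) * (v j) ^ 3 := by
    rw [← (Equiv.subRight (1 : ℤ)).tsum_eq (fun j => Dc dx w j * (v (j + 1)) ^ 3)]
    exact tsum_congr fun j => by simp [Equiv.subRight_apply, sub_add_cancel]
  have hsh2 : ∑' j : ℤ, Dc dx w j * (v (j - 1)) ^ 3
      = ∑' j : ℤ, Dc dx w (j + 1) * (v j) ^ 3 := by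
    rw [← (Equiv.addRight (1 : ℤ)).tsum_eq (fun j => Dc dx w j * (v (j - 1)) ^ 3)]
    exact tsum_congr fun j => by simp [Equiv.coe_addRight, add_sub_cancel_right]
  have hC1' : Summable (fun j : ℤ => Dc dx w (j - 1) * (v j) ^ 3) :=
    summable_bdd_mul (fun j => hMDw (j - 1)) hv3
  have hC2' : Summable (fun j : ℤ => Dc dx w (j + 1) * (v j) ^ 3) :=
    summable_bdd_mul (fun j => hMDw (j + 1)) hv3
  -- summation by parts
  have hcomb : (∑' j : ℤ, Dc dx w (j - 1) * (v j) ^ 3)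
      - (∑' j : ℤ, Dc dx w (j + 1) * (v j) ^ 3)
      = -(2 * dx) * ∑' j : ℤ, DD dx w j * (v j) ^ 3 := by
    rw [← Summable.tsum_sub hC1' hC2', ← tsum_mul_left]
    refine tsum_congr fun j => ?_
    have e1 : j - 1 + 1 = j := by ring
    have e2 : j - 1 - 1 = j - 2 := by ring
    have e3 : j + 1 + 1 = j + 2 := by ring
    have e4 : j + 1 - 1 = j := by ring
    unfold Dc DD
    rw [e1, e2, e3, e4]
    field_simp
    ring
  -- the key identity
  have key : ip dx (Dc dx (fun i => v i * w i)) (Dc dx (fun i => (v i) ^ 2))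
      = dx * (∑' j : ℤ, (v (j + 1) * w (j + 1) + v (j - 1) * w (j - 1)) * (Dc dx v j) ^ 2)
        - (8 * dx ^ 2 / 3) * ip dx (Dc dx w) (fun i => (Dc dx v i) ^ 3)
        - (2 / 3) * ip dx (DD dx w) (fun i => (v i) ^ 3) := by
    unfold ip
    rw [hsum, hsh1, hsh2, hcomb]
    field_simp
    ring
  -- the bound on the first term
  have hbd : dx * (∑' j : ℤ, (v (j + 1) * w (j + 1) + v (j - 1) * w (j - 1)) * (Dc dx v j) ^ 2)
      ≤ 2 * supn v * supn w * n2sq dx (Dc dx v) := by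
    have h2 : (∑' j : ℤ, (v (j + 1) * w (j + 1) + v (j - 1) * w (j - 1)) * (Dc dx v j) ^ 2)
        ≤ ∑' j : ℤ, (2 * supn v * supn w) * (Dc dx v j) ^ 2 := by
      refine Summable.tsum_le_tsum (fun j => ?_) hA (hDv2.mul_left _)
      exact mul_le_mul_of_nonneg_right ((le_abs_self _).trans (hSb j)) (sq_nonneg _)
    calc dx * (∑' j : ℤ, (v (j + 1) * w (j + 1) + v (j - 1) * w (j - 1)) * (Dc dx v j) ^ 2)
        ≤ dx * ∑' j : ℤ, (2 * supn v * supn w) * (Dc dx v j) ^ 2 :=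
          mul_le_mul_of_nonneg_left h2 hdx.le
      _ = 2 * supn v * supn w * n2sq dx (Dc dx v) := by
          rw [tsum_mul_left]; unfold n2sq; ring
  linarith [key, hbd]
end
end

section
/- For sequences e : ℤ → ℝ in ℓ²(ℤ), the discrete ℓ^∞–ℓ² interpolation inequality holds: there exists an absolute constant C > 0 (independent of Δx) such that ‖e‖_{ℓ^∞} ≤ C ‖e‖_{ℓ²_Δ}^{1/2} ‖D₊e‖_{ℓ²_Δ}^{1/2}. -/
noncomputable section
open scoped BigOperators

private lemma summable_abs_mul' {a b : ℤ → ℝ} (ha : Summable fun k => a k ^ 2)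
    (hb : Summable fun k => b k ^ 2) : Summable fun k => |a k * b k| := by
  refine Summable.of_nonneg_of_le (fun k => abs_nonneg _) (fun k => ?_)
    ((ha.add hb).div_const 2)
  have h := two_mul_le_add_sq |a k| |b k|
  rw [abs_mul]
  nlinarith [sq_abs (a k), sq_abs (b k)]

private lemma tsum_cs' {a b : ℤ → ℝ} (ha : Summable fun k => a k ^ 2)
    (hb : Summable fun k => b k ^ 2) :
    ∑' k, |a k * b k| ≤ Real.sqrt (∑' k, a k ^ 2) * Real.sqrt (∑' k, b k ^ 2) := by
  refine Summable.tsum_le_of_sum_le (summable_abs_mul' ha hb) fun s => ?_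
  calc ∑ k ∈ s, |a k * b k| = ∑ k ∈ s, |a k| * |b k| := by simp [abs_mul]
    _ ≤ Real.sqrt (∑ k ∈ s, |a k| ^ 2) * Real.sqrt (∑ k ∈ s, |b k| ^ 2) :=
        Real.sum_mul_le_sqrt_mul_sqrt s _ _
    _ ≤ Real.sqrt (∑' k, a k ^ 2) * Real.sqrt (∑' k, b k ^ 2) := by
        simp only [sq_abs]
        gcongr
        all_goals first
          | exact Real.sqrt_nonneg _
          | exact Summable.sum_le_tsum s (fun _ _ => sq_nonneg _) ha
          | exact Summable.sum_le_tsum s (fun _ _ => sq_nonneg _) hb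

private lemma telescope' {f : ℤ → ℝ} (hf : Summable fun k => f k ^ 2) (j : ℤ) :
    f j ^ 2 = ∑' n : ℕ, (f (j + n) ^ 2 - f (j + n + 1) ^ 2) := by
  have hinj : Function.Injective (fun n : ℕ => j + (n : ℤ)) := fun m n h => by
    simpa using h
  have hF : Summable (fun n : ℕ => f (j + n) ^ 2) := hf.comp_injective hinj
  have hF' : Summable (fun n : ℕ => f (j + n + 1) ^ 2) := by
    have h2 : Summable (fun n : ℕ => f (j + ((n + 1 : ℕ) : ℤ)) ^ 2) :=
      hF.comp_injective Nat.succ_injective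
    convert h2 using 2 with n
    push_cast
    ring_nf
  have h3 := Summable.tsum_eq_zero_add hF
  rw [Summable.tsum_sub hF hF']
  have : (fun n : ℕ => f (j + ((n + 1 : ℕ) : ℤ)) ^ 2) = fun n : ℕ => f (j + n + 1) ^ 2 := by
    funext n; push_cast; ring_nf
  rw [this] at h3
  simp only [Nat.cast_zero, add_zero] at h3
  linarith

theorem discrete_interpolation :
    ∃ C : ℝ, 0 < C ∧ ∀ dx : ℝ, 0 < dx → ∀ e : ℤ → ℝ, l2 e →
      supn e ≤ C * Real.sqrt (nrm dx e) * Real.sqrt (nrm dx (Dp dx e)) := by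
  refine ⟨2, by norm_num, fun dx hdx e he => ?_⟩
  have he' : Summable (fun k : ℤ => e (k + 1) ^ 2) :=
    he.comp_injective (add_left_injective 1)
  set S : ℝ := ∑' k : ℤ, e k ^ 2 with hSdef
  set T : ℝ := ∑' k : ℤ, Dp dx e k ^ 2 with hTdef
  have hS0 : 0 ≤ S := tsum_nonneg fun k => sq_nonneg _
  have hT0 : 0 ≤ T := tsum_nonneg fun k => sq_nonneg _
  set a : ℤ → ℝ := fun k => e k + e (k + 1) with hadef
  set b : ℤ → ℝ := fun k => e (k + 1) - e k with hbdef
  have ha : Summable fun k => a k ^ 2 := by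
    refine Summable.of_nonneg_of_le (fun k => sq_nonneg _) (fun k => ?_)
      ((he.add he').mul_left 2)
    simp only [hadef]
    nlinarith [sq_nonneg (e k - e (k + 1))]
  have hb : Summable fun k => b k ^ 2 := by
    refine Summable.of_nonneg_of_le (fun k => sq_nonneg _) (fun k => ?_)
      ((he.add he').mul_left 2)
    simp only [hbdef]
    nlinarith [sq_nonneg (e k + e (k + 1))]
  -- shift invariance
  have hshift : ∑' k : ℤ, e (k + 1) ^ 2 = S :=
    (Equiv.addRight (1 : ℤ)).tsum_eq fun k => e k ^ 2
  have hSA : (∑' k : ℤ, a k ^ 2) ≤ 4 * S := by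
    have h1 : (∑' k : ℤ, a k ^ 2) ≤ ∑' k : ℤ, (2 * e k ^ 2 + 2 * e (k + 1) ^ 2) := by
      refine Summable.tsum_le_tsum (fun k => ?_) ha ((he.mul_left 2).add (he'.mul_left 2))
      simp only [hadef]
      nlinarith [sq_nonneg (e k - e (k + 1))]
    have h2 : ∑' k : ℤ, (2 * e k ^ 2 + 2 * e (k + 1) ^ 2) = 4 * S := by
      rw [Summable.tsum_add (he.mul_left 2) (he'.mul_left 2), tsum_mul_left, tsum_mul_left, hshift]
      ring
    linarith
  have hSB : (∑' k : ℤ, b k ^ 2) = dx ^ 2 * T := by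
    rw [hTdef, ← tsum_mul_left]
    congr 1
    funext k
    have : b k = dx * Dp dx e k := by
      simp only [hbdef, Dp]
      field_simp
    rw [this]
    ring
  -- pointwise bound
  have key : ∀ j : ℤ, e j ^ 2 ≤ 2 * nrm dx e * nrm dx (Dp dx e) := by
    intro j
    have hinj : Function.Injective (fun n : ℕ => j + (n : ℤ)) := fun m n h => by
      simpa using h
    have hF : Summable (fun n : ℕ => e (j + n) ^ 2) := he.comp_injective hinj
    have hF' : Summable (fun n : ℕ => e (j + n + 1) ^ 2) := by
      have h2 : Summable (fun n : ℕ => e (j + ((n + 1 : ℕ) : ℤ)) ^ 2) :=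
        hF.comp_injective Nat.succ_injective
      convert h2 using 2 with n
      push_cast
      ring_nf
    have habs : Summable fun k : ℤ => |a k * b k| := summable_abs_mul' ha hb
    have step1 : e j ^ 2 ≤ ∑' k : ℤ, |a k * b k| := by
      rw [telescope' he j]
      refine le_trans (Summable.tsum_le_tsum (fun n => ?_) (hF.sub hF')
        (habs.comp_injective hinj)) ?_
      · have hab : a (j + n) * b (j + n) = e (j + n + 1) ^ 2 - e (j + n) ^ 2 := by
          simp only [hadef, hbdef]; ring
        calc e (j + n) ^ 2 - e (j + n + 1) ^ 2 = -(a (j + n) * b (j + n)) := by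
              rw [hab]; ring
          _ ≤ |a (j + n) * b (j + n)| := neg_le_abs _
      · exact Summable.tsum_le_tsum_of_inj _ hinj (fun c _ => abs_nonneg _)
          (fun n => le_refl _) (habs.comp_injective hinj) habs
    have step2 : (∑' k : ℤ, |a k * b k|) ≤
        Real.sqrt (4 * S) * Real.sqrt (dx ^ 2 * T) := by
      refine le_trans (tsum_cs' ha hb) ?_
      rw [hSB]
      gcongr
    have hn1 : n2sq dx e = dx * S := rfl
    have hn2 : n2sq dx (Dp dx e) = dx * T := rfl
    have hN1 : nrm dx e ^ 2 = dx * S := by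
      rw [nrm, Real.sq_sqrt (hn1 ▸ mul_nonneg hdx.le hS0), hn1]
    have hN2 : nrm dx (Dp dx e) ^ 2 = dx * T := by
      rw [nrm, Real.sq_sqrt (hn2 ▸ mul_nonneg hdx.le hT0), hn2]
    have hN1' : 0 ≤ nrm dx e := Real.sqrt_nonneg _
    have hN2' : 0 ≤ nrm dx (Dp dx e) := Real.sqrt_nonneg _
    have hsq : (2 * nrm dx e * nrm dx (Dp dx e)) ^ 2 = 4 * S * (dx ^ 2 * T) := by
      have : (2 * nrm dx e * nrm dx (Dp dx e)) ^ 2 =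
          4 * (nrm dx e ^ 2) * (nrm dx (Dp dx e) ^ 2) := by ring
      rw [this, hN1, hN2]; ring
    have step3 : Real.sqrt (4 * S) * Real.sqrt (dx ^ 2 * T) =
        2 * nrm dx e * nrm dx (Dp dx e) := by
      rw [← Real.sqrt_mul (by positivity : (0:ℝ) ≤ 4 * S), ← hsq,
        Real.sqrt_sq (mul_nonneg (mul_nonneg (by norm_num) hN1') hN2')]
    linarith [step1, step2.trans_eq step3]
  -- conclude
  rw [supn]
  refine ciSup_le fun j => ?_
  have hN1' : 0 ≤ nrm dx e := Real.sqrt_nonneg _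
  have hN2' : 0 ≤ nrm dx (Dp dx e) := Real.sqrt_nonneg _
  have hrhs : (0:ℝ) ≤ 2 * Real.sqrt (nrm dx e) * Real.sqrt (nrm dx (Dp dx e)) := by
    positivity
  have h1 : e j ^ 2 ≤ (2 * Real.sqrt (nrm dx e) * Real.sqrt (nrm dx (Dp dx e))) ^ 2 := by
    have h2 : (2 * Real.sqrt (nrm dx e) * Real.sqrt (nrm dx (Dp dx e))) ^ 2 =
        4 * nrm dx e * nrm dx (Dp dx e) := by
      have := Real.sq_sqrt hN1'
      have := Real.sq_sqrt hN2'
      nlinarith [Real.sqrt_nonneg (nrm dx e), Real.sqrt_nonneg (nrm dx (Dp dx e))]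
    rw [h2]
    nlinarith [key j, mul_nonneg hN1' hN2']
  calc |e j| = Real.sqrt (e j ^ 2) := (Real.sqrt_sq_eq_abs _).symm
    _ ≤ Real.sqrt ((2 * Real.sqrt (nrm dx e) * Real.sqrt (nrm dx (Dp dx e))) ^ 2) :=
        Real.sqrt_le_sqrt h1
    _ = 2 * Real.sqrt (nrm dx e) * Real.sqrt (nrm dx (Dp dx e)) := Real.sqrt_sq hrhs
end
end

section
/- Linear discrete energy conservation for the Crank–Nicolson abcd scheme: let a ≤ 0, c ≤ 0, b ≥ 0, d ≥ 0, Δt, Δx > 0, and let (ηⁿ, uⁿ) ∈ ℓ²(ℤ) × ℓ²(ℤ) solve the linear Crank–Nicolson scheme (I − bD₊D₋)(ηⁿ⁺¹ − ηⁿ)/Δt + (I + aD₊D₋)D((uⁿ + uⁿ⁺¹)/2) = 0 and (I − dD₊D₋)(uⁿ⁺¹ − uⁿ)/Δt + (I + cD₊D₋)D((ηⁿ + ηⁿ⁺¹)/2) = 0. Then the discrete energy E(ηⁿ, uⁿ) = ‖ηⁿ‖² + (b−c)‖D₊ηⁿ‖² + b(−c)‖D₊D₋ηⁿ‖² + ‖uⁿ‖²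 + (d−a)‖D₊uⁿ‖² + d(−a)‖D₊D₋uⁿ‖² (all norms ℓ²_Δ) satisfies E(ηⁿ⁺¹, uⁿ⁺¹) = E(ηⁿ, uⁿ). -/
noncomputable section
open scoped BigOperators

namespace CNaux

lemma l2_congr {v w : ℤ → ℝ} (h : ∀ j, v j = w j) (hv : l2 v) : l2 w :=
  hv.congr fun j => by rw [h j]

lemma l2_sp {v : ℤ → ℝ} (hv : l2 v) : l2 (fun j => v (j + 1)) :=
  (hv.comp_injective (add_left_injective (1 : ℤ))).congr fun _ => rfl

lemma l2_sm {v : ℤ → ℝ} (hv : l2 v) : l2 (fun j => v (j - 1)) :=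
  (hv.comp_injective (sub_left_injective (b := (1 : ℤ)))).congr fun _ => rfl

lemma l2_add {v w : ℤ → ℝ} (hv : l2 v) (hw : l2 w) : l2 (fun j => v j + w j) := by
  have h2 : Summable (fun j : ℤ => 2 * (v j) ^ 2 + 2 * (w j) ^ 2) :=
    (hv.mul_left 2).add (hw.mul_left 2)
  exact Summable.of_nonneg_of_le (fun j => sq_nonneg _)
    (fun j => by show (v j + w j) ^ 2 ≤ _; nlinarith [sq_nonneg (v j - w j)]) h2

lemma l2_const_mul (r : ℝ) {v : ℤ → ℝ} (hv : l2 v) : l2 (fun j => r * v j) :=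
  (hv.mul_left (r ^ 2)).congr fun j => (mul_pow r (v j) 2).symm

lemma l2_sub {v w : ℤ → ℝ} (hv : l2 v) (hw : l2 w) : l2 (fun j => v j - w j) :=
  l2_congr (fun j => by ring) (l2_add hv (l2_const_mul (-1) hw))

lemma l2_Dp (dx : ℝ) {v : ℤ → ℝ} (hv : l2 v) : l2 (Dp dx v) :=
  l2_congr (fun j => by simp only [Dp]; ring)
    (l2_const_mul dx⁻¹ (l2_sub (l2_sp hv) hv))

lemma l2_Dc (dx : ℝ) {v : ℤ → ℝ} (hv : l2 v) : l2 (Dc dx v) :=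
  l2_congr (fun j => by simp only [Dc]; ring)
    (l2_const_mul (2 * dx)⁻¹ (l2_sub (l2_sp hv) (l2_sm hv)))

lemma l2_L (dx : ℝ) {v : ℤ → ℝ} (hv : l2 v) : l2 (DpDm dx v) :=
  l2_congr (fun j => by simp only [DpDm]; ring)
    (l2_const_mul (dx ^ 2)⁻¹ (l2_add (l2_sub (l2_sp hv) (l2_const_mul 2 hv)) (l2_sm hv)))

lemma summable_mul {v w : ℤ → ℝ} (hv : l2 v) (hw : l2 w) :
    Summable (fun j : ℤ => v j * w j) := by
  apply Summable.of_norm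
  apply Summable.of_nonneg_of_le (fun j => norm_nonneg _) (fun j => ?_) (hv.add hw)
  rw [Real.norm_eq_abs, abs_mul]
  nlinarith [sq_nonneg (|v j| - |w j|), sq_abs (v j), sq_abs (w j),
    abs_nonneg (v j), abs_nonneg (w j)]

def ts (v w : ℤ → ℝ) : ℝ := ∑' j : ℤ, v j * w j

lemma ts_comm (v w : ℤ → ℝ) : ts v w = ts w v := tsum_congr fun j => mul_comm _ _

lemma shiftR (f : ℤ → ℝ) : ∑' j : ℤ, f (j + 1) = ∑' j : ℤ, f j :=
  (Equiv.addRight (1 : ℤ)).tsum_eq f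

lemma shiftL (f : ℤ → ℝ) : ∑' j : ℤ, f (j - 1) = ∑' j : ℤ, f j :=
  (Equiv.subRight (1 : ℤ)).tsum_eq f

lemma tsP (v w : ℤ → ℝ) : ∑' j : ℤ, v j * w (j - 1) = ∑' j : ℤ, v (j + 1) * w j := by
  have h := shiftL (fun j : ℤ => v (j + 1) * w j)
  rw [← h]
  exact tsum_congr fun j => by rw [Int.sub_add_cancel]

lemma tsM (v w : ℤ → ℝ) : ∑' j : ℤ, v j * w (j + 1) = ∑' j : ℤ, v (j - 1) * w j := by
  have h := shiftR (fun j : ℤ => v (j - 1) * w j)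
  rw [← h]
  exact tsum_congr fun j => by rw [Int.add_sub_cancel]

lemma tsB (v w : ℤ → ℝ) : ∑' j : ℤ, v (j + 1) * w (j + 1) = ∑' j : ℤ, v j * w j :=
  shiftR (fun j : ℤ => v j * w j)

lemma tsum_lin4 {f g h k : ℤ → ℝ} (α β γ δ : ℝ)
    (hf : Summable f) (hg : Summable g) (hh : Summable h) (hk : Summable k) :
    ∑' j : ℤ, (α * f j + β * g j + γ * h j + δ * k j)
      = α * ∑' j : ℤ, f j + β * ∑' j : ℤ, g j + γ * ∑' j : ℤ, h j + δ * ∑' j : ℤ, k j := by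
  rw [Summable.tsum_add (((hf.mul_left α).add (hg.mul_left β)).add (hh.mul_left γ)) (hk.mul_left δ),
      Summable.tsum_add ((hf.mul_left α).add (hg.mul_left β)) (hh.mul_left γ),
      Summable.tsum_add (hf.mul_left α) (hg.mul_left β),
      tsum_mul_left, tsum_mul_left, tsum_mul_left, tsum_mul_left]


lemma ts_L_sym (dx : ℝ) {v w : ℤ → ℝ} (hv : l2 v) (hw : l2 w) :
    ts (DpDm dx v) w = ts v (DpDm dx w) := by
  have s0 := summable_mul hv hw
  have s1 := summable_mul (l2_sp hv) hw
  have s2 := summable_mul hv (l2_sp hw)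
  have s3 := summable_mul (l2_sm hv) hw
  have s4 := summable_mul hv (l2_sm hw)
  have e1 : ts (DpDm dx v) w
      = (dx ^ 2)⁻¹ * ∑' j : ℤ, v (j + 1) * w j + (-2 * (dx ^ 2)⁻¹) * ∑' j : ℤ, v j * w j
        + (dx ^ 2)⁻¹ * ∑' j : ℤ, v (j - 1) * w j + 0 * ∑' j : ℤ, v j * w j := by
    rw [ts, ← tsum_lin4 _ _ _ _ s1 s0 s3 s0]
    exact tsum_congr fun j => by simp only [DpDm]; ring
  have e2 : ts v (DpDm dx w)
      = (dx ^ 2)⁻¹ * ∑' j : ℤ, v j * w (j + 1) + (-2 * (dx ^ 2)⁻¹) * ∑' j : ℤ, v j * w j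
        + (dx ^ 2)⁻¹ * ∑' j : ℤ, v j * w (j - 1) + 0 * ∑' j : ℤ, v j * w j := by
    rw [ts, ← tsum_lin4 _ _ _ _ s2 s0 s4 s0]
    exact tsum_congr fun j => by simp only [DpDm]; ring
  rw [e1, e2, tsP v w, tsM v w]
  ring

lemma ts_L_Dp (dx : ℝ) {v w : ℤ → ℝ} (hv : l2 v) (hw : l2 w) :
    ts (DpDm dx v) w = - ts (Dp dx v) (Dp dx w) := by
  have s0 := summable_mul hv hw
  have s1 := summable_mul (l2_sp hv) hw
  have s2 := summable_mul hv (l2_sp hw)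
  have s3 := summable_mul (l2_sm hv) hw
  have s5 := summable_mul (l2_sp hv) (l2_sp hw)
  have e1 : ts (DpDm dx v) w
      = (dx ^ 2)⁻¹ * ∑' j : ℤ, v (j + 1) * w j + (-2 * (dx ^ 2)⁻¹) * ∑' j : ℤ, v j * w j
        + (dx ^ 2)⁻¹ * ∑' j : ℤ, v (j - 1) * w j + 0 * ∑' j : ℤ, v j * w j := by
    rw [ts, ← tsum_lin4 _ _ _ _ s1 s0 s3 s0]
    exact tsum_congr fun j => by simp only [DpDm]; ring
  have e2 : ts (Dp dx v) (Dp dx w)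
      = (dx ^ 2)⁻¹ * ∑' j : ℤ, v (j + 1) * w (j + 1) + (-(dx ^ 2)⁻¹) * ∑' j : ℤ, v (j + 1) * w j
        + (-(dx ^ 2)⁻¹) * ∑' j : ℤ, v j * w (j + 1) + (dx ^ 2)⁻¹ * ∑' j : ℤ, v j * w j := by
    rw [ts, ← tsum_lin4 _ _ _ _ s5 s1 s2 s0]
    exact tsum_congr fun j => by simp only [Dp]; ring
  rw [e1, e2, tsB v w, tsM v w]
  ring

lemma ts_Dc_skew (dx : ℝ) {v w : ℤ → ℝ} (hv : l2 v) (hw : l2 w) :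
    ts (Dc dx v) w = - ts v (Dc dx w) := by
  have s0 := summable_mul hv hw
  have s1 := summable_mul (l2_sp hv) hw
  have s2 := summable_mul hv (l2_sp hw)
  have s3 := summable_mul (l2_sm hv) hw
  have s4 := summable_mul hv (l2_sm hw)
  have e1 : ts (Dc dx v) w
      = (2 * dx)⁻¹ * ∑' j : ℤ, v (j + 1) * w j + (-(2 * dx)⁻¹) * ∑' j : ℤ, v (j - 1) * w j
        + 0 * ∑' j : ℤ, v j * w j + 0 * ∑' j : ℤ, v j * w j := by
    rw [ts, ← tsum_lin4 _ _ _ _ s1 s3 s0 s0]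
    exact tsum_congr fun j => by simp only [Dc]; ring
  have e2 : ts v (Dc dx w)
      = (2 * dx)⁻¹ * ∑' j : ℤ, v j * w (j + 1) + (-(2 * dx)⁻¹) * ∑' j : ℤ, v j * w (j - 1)
        + 0 * ∑' j : ℤ, v j * w j + 0 * ∑' j : ℤ, v j * w j := by
    rw [ts, ← tsum_lin4 _ _ _ _ s2 s4 s0 s0]
    exact tsum_congr fun j => by simp only [Dc]; ring
  rw [e1, e2, tsP v w, tsM v w]
  ring

lemma Dc_L_comm (dx : ℝ) (v : ℤ → ℝ) : Dc dx (DpDm dx v) = DpDm dx (Dc dx v) := by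
  funext j
  simp only [Dc, DpDm]
  rw [Int.add_sub_cancel, Int.sub_add_cancel]
  ring


lemma ts_sq_diff {p P : ℤ → ℝ} (hp : l2 p) (hP : l2 P) :
    ts (fun i => P i - p i) (fun i => P i + p i) = ts P P - ts p p := by
  have h1 : ts (fun i => P i - p i) (fun i => P i + p i)
      = ∑' j : ℤ, (P j * P j - p j * p j) := tsum_congr fun j => by ring
  rw [h1, Summable.tsum_sub (summable_mul hP hP) (summable_mul hp hp)]
  rfl

lemma ts_expand_pp {v v' w w' : ℤ → ℝ} (b c : ℝ)
    (hv : l2 v) (hv' : l2 v') (hw : l2 w) (hw' : l2 w') :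
    ts (fun j => v j + b * v' j) (fun j => w j + c * w' j)
      = ts v w + c * ts v w' + b * ts v' w + b * c * ts v' w' := by
  have e := tsum_lin4 1 c b (b * c) (summable_mul hv hw) (summable_mul hv hw')
    (summable_mul hv' hw) (summable_mul hv' hw')
  have h1 : ts (fun j => v j + b * v' j) (fun j => w j + c * w' j)
      = ∑' j : ℤ, (1 * (v j * w j) + c * (v j * w' j) + b * (v' j * w j)
          + b * c * (v' j * w' j)) := tsum_congr fun j => by ring
  rw [h1, e]
  simp only [ts]
  ring

lemma cross1 (dx : ℝ) {e w : ℤ → ℝ} (he : l2 e) (hw : l2 w) :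
    ts (Dc dx w) e + ts (Dc dx e) w = 0 := by
  rw [ts_Dc_skew dx hw he, ts_comm w (Dc dx e)]
  ring

lemma cross2 (dx : ℝ) {e w : ℤ → ℝ} (he : l2 e) (hw : l2 w) :
    ts (Dc dx w) (DpDm dx e) + ts (DpDm dx (Dc dx e)) w = 0 := by
  have h1 : ts (DpDm dx (Dc dx e)) w = ts (Dc dx e) (DpDm dx w) :=
    ts_L_sym dx (l2_Dc dx he) hw
  have h2 : ts (Dc dx e) (DpDm dx w) = - ts e (Dc dx (DpDm dx w)) :=
    ts_Dc_skew dx he (l2_L dx hw)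
  have h3 : ts e (Dc dx (DpDm dx w)) = ts e (DpDm dx (Dc dx w)) := by rw [Dc_L_comm]
  have h4 : ts e (DpDm dx (Dc dx w)) = ts (DpDm dx (Dc dx w)) e := ts_comm _ _
  have h5 : ts (DpDm dx (Dc dx w)) e = ts (Dc dx w) (DpDm dx e) :=
    ts_L_sym dx (l2_Dc dx hw) he
  linarith

lemma cross3 (dx : ℝ) {e w : ℤ → ℝ} (he : l2 e) (hw : l2 w) :
    ts (DpDm dx (Dc dx w)) e + ts (Dc dx e) (DpDm dx w) = 0 := by
  have h := cross2 dx hw he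
  linarith

lemma cross4 (dx : ℝ) {e w : ℤ → ℝ} (he : l2 e) (hw : l2 w) :
    ts (DpDm dx (Dc dx w)) (DpDm dx e) + ts (DpDm dx (Dc dx e)) (DpDm dx w) = 0 := by
  have h1 : ts (DpDm dx (Dc dx e)) (DpDm dx w) = ts (Dc dx e) (DpDm dx (DpDm dx w)) :=
    ts_L_sym dx (l2_Dc dx he) (l2_L dx hw)
  have h2 : ts (Dc dx e) (DpDm dx (DpDm dx w))
      = - ts e (Dc dx (DpDm dx (DpDm dx w))) :=
    ts_Dc_skew dx he (l2_L dx (l2_L dx hw))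
  have h3 : Dc dx (DpDm dx (DpDm dx w)) = DpDm dx (DpDm dx (Dc dx w)) := by
    rw [Dc_L_comm dx (DpDm dx w), Dc_L_comm dx w]
  have h4 : ts e (DpDm dx (DpDm dx (Dc dx w)))
      = ts (DpDm dx e) (DpDm dx (Dc dx w)) :=
    (ts_L_sym dx he (l2_L dx (l2_Dc dx hw))).symm
  have h5 : ts (DpDm dx e) (DpDm dx (Dc dx w))
      = ts (DpDm dx (Dc dx w)) (DpDm dx e) := ts_comm _ _
  rw [h1, h2, h3, h4, h5]
  ring

lemma ts_cross (dx a c : ℝ) (e w : ℤ → ℝ) (he : l2 e) (hw : l2 w) :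
    ts (fun j => Dc dx w j + a * DpDm dx (Dc dx w) j) (fun j => e j + c * DpDm dx e j)
      + ts (fun j => Dc dx e j + c * DpDm dx (Dc dx e) j) (fun j => w j + a * DpDm dx w j)
      = 0 := by
  rw [ts_expand_pp a c (l2_Dc dx hw) (l2_L dx (l2_Dc dx hw)) he (l2_L dx he),
      ts_expand_pp c a (l2_Dc dx he) (l2_L dx (l2_Dc dx he)) hw (l2_L dx hw)]
  linear_combination cross1 dx he hw + c * cross2 dx he hw + a * cross3 dx he hw
    + (a * c) * cross4 dx he hw

lemma ts_energy (dx b c : ℝ) (p P : ℤ → ℝ) (hp : l2 p) (hP : l2 P) :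
    ts (fun j => (P j - p j) - b * DpDm dx (fun i => P i - p i) j)
       (fun j => (P j + p j) + c * DpDm dx (fun i => P i + p i) j)
      = (ts P P - ts p p)
        + (b - c) * (ts (Dp dx P) (Dp dx P) - ts (Dp dx p) (Dp dx p))
        - b * c * (ts (DpDm dx P) (DpDm dx P) - ts (DpDm dx p) (DpDm dx p)) := by
  set δ : ℤ → ℝ := fun i => P i - p i with hδ
  set σ : ℤ → ℝ := fun i => P i + p i with hσ
  have hδ2 : l2 δ := by rw [hδ]; exact l2_sub hP hp
  have hσ2 : l2 σ := by rw [hσ]; exact l2_add hP hp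
  have hLδ : l2 (DpDm dx δ) := l2_L dx hδ2
  have hLσ : l2 (DpDm dx σ) := l2_L dx hσ2
  have e0 : ts (fun j => (P j - p j) - b * DpDm dx δ j)
        (fun j => (P j + p j) + c * DpDm dx σ j)
      = 1 * ts δ σ + c * ts δ (DpDm dx σ) + (-b) * ts (DpDm dx δ) σ
        + (-b * c) * ts (DpDm dx δ) (DpDm dx σ) := by
    simp only [ts]
    rw [← tsum_lin4 1 c (-b) (-b * c) (summable_mul hδ2 hσ2) (summable_mul hδ2 hLσ)
        (summable_mul hLδ hσ2) (summable_mul hLδ hLσ)]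
    exact tsum_congr fun j => by simp only [hδ, hσ]; ring
  rw [e0]
  have h1 : ts δ σ = ts P P - ts p p := by rw [hδ, hσ]; exact ts_sq_diff hp hP
  have h2 : ts δ (DpDm dx σ) = - ts (Dp dx δ) (Dp dx σ) := by
    rw [← ts_L_sym dx hδ2 hσ2]
    exact ts_L_Dp dx hδ2 hσ2
  have h3 : ts (DpDm dx δ) σ = - ts (Dp dx δ) (Dp dx σ) := ts_L_Dp dx hδ2 hσ2
  have h4 : ts (Dp dx δ) (Dp dx σ) = ts (Dp dx P) (Dp dx P) - ts (Dp dx p) (Dp dx p) := by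
    have e : ts (Dp dx δ) (Dp dx σ)
        = ts (fun i => Dp dx P i - Dp dx p i) (fun i => Dp dx P i + Dp dx p i) :=
      tsum_congr fun j => by simp only [hδ, hσ, Dp]; ring
    rw [e]
    exact ts_sq_diff (l2_Dp dx hp) (l2_Dp dx hP)
  have h5 : ts (DpDm dx δ) (DpDm dx σ)
      = ts (DpDm dx P) (DpDm dx P) - ts (DpDm dx p) (DpDm dx p) := by
    have e : ts (DpDm dx δ) (DpDm dx σ)
        = ts (fun i => DpDm dx P i - DpDm dx p i) (fun i => DpDm dx P i + DpDm dx p i) :=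
      tsum_congr fun j => by simp only [hδ, hσ, DpDm]; ring
    rw [e]
    exact ts_sq_diff (l2_L dx hp) (l2_L dx hP)
  rw [h1, h2, h3, h4, h5]
  ring


lemma n2sq_ts (dx : ℝ) (v : ℤ → ℝ) : n2sq dx v = dx * ts v v := by
  rw [n2sq, ts]
  congr 1
  exact tsum_congr fun j => sq (v j)

end CNaux

open CNaux

theorem crank_nicolson_energy_conservation
    (a b c d dx dt : ℝ) (ha : a ≤ 0) (hb : 0 ≤ b) (hc : c ≤ 0) (hd : 0 ≤ d)
    (hdx : 0 < dx) (hdt : 0 < dt)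
    (η u : ℕ → ℤ → ℝ)
    (hη : ∀ n, l2 (η n)) (hu : ∀ n, l2 (u n))
    (heq1 : ∀ n j,
      ((η (n + 1) j - η n j) - b * DpDm dx (fun i => η (n + 1) i - η n i) j) / dt
        + (Dc dx (fun i => (u n i + u (n + 1) i) / 2) j
            + a * DpDm dx (Dc dx (fun i => (u n i + u (n + 1) i) / 2)) j) = 0)
    (heq2 : ∀ n j,
      ((u (n + 1) j - u n j) - d * DpDm dx (fun i => u (n + 1) i - u n i) j) / dt
        + (Dc dx (fun i => (η n i + η (n + 1) i) / 2) j
            + c * DpDm dx (Dc dx (fun i => (η n i + η (n + 1) i) / 2)) j) = 0) :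
    ∀ n,
      n2sq dx (η (n + 1)) + (b - c) * n2sq dx (Dp dx (η (n + 1)))
        + b * (-c) * n2sq dx (DpDm dx (η (n + 1)))
        + n2sq dx (u (n + 1)) + (d - a) * n2sq dx (Dp dx (u (n + 1)))
        + d * (-a) * n2sq dx (DpDm dx (u (n + 1)))
      = n2sq dx (η n) + (b - c) * n2sq dx (Dp dx (η n))
          + b * (-c) * n2sq dx (DpDm dx (η n))
          + n2sq dx (u n) + (d - a) * n2sq dx (Dp dx (u n))
          + d * (-a) * n2sq dx (DpDm dx (u n)) := by

  intro n
  have hdt' : dt ≠ 0 := ne_of_gt hdt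
  set W : ℤ → ℝ := fun i => (u n i + u (n + 1) i) / 2 with hW
  set Ce : ℤ → ℝ := fun i => (η n i + η (n + 1) i) / 2 with hCe
  have l2W : l2 W := by
    rw [hW]
    exact l2_congr (fun j => by ring) (l2_const_mul 2⁻¹ (l2_add (hu n) (hu (n + 1))))
  have l2Ce : l2 Ce := by
    rw [hCe]
    exact l2_congr (fun j => by ring) (l2_const_mul 2⁻¹ (l2_add (hη n) (hη (n + 1))))
  have h1 : ∀ j : ℤ, (η (n + 1) j - η n j) - b * DpDm dx (fun i => η (n + 1) i - η n i) j
      = -(dt * (Dc dx W j + a * DpDm dx (Dc dx W) j)) := by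
    intro j
    have h := heq1 n j
    rw [← hW] at h
    have h' : ((η (n + 1) j - η n j) - b * DpDm dx (fun i => η (n + 1) i - η n i) j) / dt
        = -(Dc dx W j + a * DpDm dx (Dc dx W) j) := by linarith
    calc (η (n + 1) j - η n j) - b * DpDm dx (fun i => η (n + 1) i - η n i) j
        = ((η (n + 1) j - η n j) - b * DpDm dx (fun i => η (n + 1) i - η n i) j) / dt * dt :=
          (div_mul_cancel₀ _ hdt').symm
      _ = -(Dc dx W j + a * DpDm dx (Dc dx W) j) * dt := by rw [h']
      _ = -(dt * (Dc dx W j + a * DpDm dx (Dc dx W) j)) := by ring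
  have h2 : ∀ j : ℤ, (u (n + 1) j - u n j) - d * DpDm dx (fun i => u (n + 1) i - u n i) j
      = -(dt * (Dc dx Ce j + c * DpDm dx (Dc dx Ce) j)) := by
    intro j
    have h := heq2 n j
    rw [← hCe] at h
    have h' : ((u (n + 1) j - u n j) - d * DpDm dx (fun i => u (n + 1) i - u n i) j) / dt
        = -(Dc dx Ce j + c * DpDm dx (Dc dx Ce) j) := by linarith
    calc (u (n + 1) j - u n j) - d * DpDm dx (fun i => u (n + 1) i - u n i) j
        = ((u (n + 1) j - u n j) - d * DpDm dx (fun i => u (n + 1) i - u n i) j) / dt * dt :=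
          (div_mul_cancel₀ _ hdt').symm
      _ = -(Dc dx Ce j + c * DpDm dx (Dc dx Ce) j) * dt := by rw [h']
      _ = -(dt * (Dc dx Ce j + c * DpDm dx (Dc dx Ce) j)) := by ring
  have E1 := ts_energy dx b c (η n) (η (n + 1)) (hη n) (hη (n + 1))
  have E2 := ts_energy dx d a (u n) (u (n + 1)) (hu n) (hu (n + 1))
  have C1 : ts (fun j => (η (n + 1) j - η n j) - b * DpDm dx (fun i => η (n + 1) i - η n i) j)
        (fun j => (η (n + 1) j + η n j) + c * DpDm dx (fun i => η (n + 1) i + η n i) j)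
      = ((-2) * dt) * ts (fun j => Dc dx W j + a * DpDm dx (Dc dx W) j)
          (fun j => Ce j + c * DpDm dx Ce j) := by
    simp only [ts]
    rw [← tsum_mul_left]
    refine tsum_congr fun j => ?_
    rw [h1 j]
    simp only [hCe, DpDm]
    ring
  have C2 : ts (fun j => (u (n + 1) j - u n j) - d * DpDm dx (fun i => u (n + 1) i - u n i) j)
        (fun j => (u (n + 1) j + u n j) + a * DpDm dx (fun i => u (n + 1) i + u n i) j)
      = ((-2) * dt) * ts (fun j => Dc dx Ce j + c * DpDm dx (Dc dx Ce) j)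
          (fun j => W j + a * DpDm dx W j) := by
    simp only [ts]
    rw [← tsum_mul_left]
    refine tsum_congr fun j => ?_
    rw [h2 j]
    simp only [hW, DpDm]
    ring
  have CC := ts_cross dx a c Ce W l2Ce l2W
  simp only [n2sq_ts]
  linear_combination dx * C1 - dx * E1 + dx * C2 - dx * E2 + (dx * ((-2) * dt)) * CC
end
end
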